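/- Let T(x,y) = (x+r, y+s) be a plane translation whose induced torus rotation is ergodic for Lebesgue measure, and let R be an exchange of m pieces D₁,…,D_m adapted to T, with translation vectors 𝐧_i = (n_i, m_i) ∈ ℤ² and piece measures α_i = μ(D_i), whose generated system is measure-equivalent to the induced torus rotation. Then the frequencies of visits determine the translation vector: r = Σ_{i=1}^m n_i α_i and s = Σ_{i=1}^m m_i α_i. -/

import Mathlib

open MeasureTheory Filter Topology

noncomputable section

/-- The inclusion of `ℤ × ℤ` into `ℝ × ℝ`. -/
def latVec (v : ℤ × ℤ) : ℝ × ℝ := ((v.1 : ℝ), (v.2 : ℝ))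

/-- An exchange of `m` pieces of the plane adapted to a measurable map `T` of the plane:
measurable pieces `D i`, pairwise almost disjoint, whose union has Lebesgue measure 1 and is
almost surely a fundamental domain for `ℤ²`, together with integer vectors `vec i` and the
exchange map `R` acting on the union of the pieces by `R x = T x - vec i` for `x ∈ D i`,
preserving Lebesgue measure.  `C` is the coding map: `C x k` records the piece containing
`R^[k] x`. -/
structure PieceExchange (T : ℝ × ℝ → ℝ × ℝ) (m : ℕ) where
  D : Fin m → Set (ℝ × ℝ)
  vec : Fin m → ℤ × ℤ
  R : ℝ × ℝ → ℝ × ℝ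
  C : ℝ × ℝ → ℕ → Fin m
  measD : ∀ i, MeasurableSet (D i)
  aeDisjoint : ∀ i j, i ≠ j → volume (D i ∩ D j) = 0
  measure_union : volume (⋃ i, D i) = 1
  fundamental :
    volume {x | x ∈ ⋃ i, D i ∧ ∃ y ∈ ⋃ i, D i, y ≠ x ∧ ∃ a b : ℤ, x - y = ((a : ℝ), (b : ℝ))} = 0
  measR : Measurable R
  measC : Measurable C
  mem_code : ∀ x ∈ ⋃ i, D i, ∀ k : ℕ, R^[k] x ∈ D (C x k)
  R_eq : ∀ x ∈ ⋃ i, D i, ∀ k : ℕ, R (R^[k] x) = T (R^[k] x) - latVec (vec (C x k))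
  meas_pres : ∀ A : Set (ℝ × ℝ), MeasurableSet A →
    volume ((⋃ i, D i) ∩ R ⁻¹' A) = volume ((⋃ i, D i) ∩ A)

namespace PieceExchange

variable {T : ℝ × ℝ → ℝ × ℝ} {m : ℕ}

/-- The domain of the exchange: the union of the pieces. -/
def domain (E : PieceExchange T m) : Set (ℝ × ℝ) := ⋃ i, E.D i

/-- The exchange is conjugate to `T` when the coding map is injective off a Lebesgue-null set. -/
def Conjugate (E : PieceExchange T m) : Prop :=
  volume {x | x ∈ E.domain ∧ ∃ y ∈ E.domain, y ≠ x ∧ E.C y = E.C x} = 0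

/-- The language of the exchange: all finite factors of coding sequences. -/
def lang (E : PieceExchange T m) : Set (List (Fin m)) :=
  {w | ∃ n k : ℕ, ∃ x ∈ E.domain, w = (List.range n).map fun j => E.C x (k + j)}

/-- The complexity of the exchange: the number of words of length `n` in its language. -/
def complexity (E : PieceExchange T m) (n : ℕ) : ℕ :=
  Nat.card {w : List (Fin m) // w ∈ E.lang ∧ w.length = n}

end PieceExchange

/-- The complexity function associated to `T`: the infimum of the complexities of the
exchanges of pieces conjugate to `T` (`⊤` if there is no such exchange). -/
def complexityFn (T : ℝ × ℝ → ℝ × ℝ) (n : ℕ) : ℕ∞ :=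
  ⨅ (m : ℕ) (E : PieceExchange T m) (_ : E.Conjugate), (E.complexity n : ℕ∞)

/-!
On `D i` the first coordinate `φ x = x.1` satisfies `φ (R x) - φ x = r - n_i`, so `r - n_{c(x)}`
is a coboundary of `R`. An integrable coboundary `φ ∘ f - φ` of a measure-preserving map of a
finite measure space has zero integral even when `φ` is not integrable: the truncations of `φ` at
level `N` give coboundaries with zero integral, dominated by `|φ ∘ f - φ|` (truncation is
1-Lipschitz) and converging to it. Integrating `r - n_{c(x)}` over the domain, of measure 1,
gives `r = Σ n_i α_i`; likewise for `s`.
-/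

theorem MeasureTheory.MeasurePreserving.integral_eq_zero_of_sub_comp_ae_eq {α : Type*}
    [MeasurableSpace α] {μ : Measure α} [IsFiniteMeasure μ] {f : α → α}
    (hf : MeasurePreserving f μ μ) {φ g : α → ℝ}
    (hφ : Measurable φ) (hg : Integrable g μ) (hφg : ∀ᵐ x ∂μ, φ (f x) - φ x = g x) :
    ∫ x, g x ∂μ = 0 := by
  set ψ : ℕ → α → ℝ := fun N x => max (-N) (min (φ x) N)
  have hψ_int : ∀ N, Integrable (ψ N) μ := fun N =>
    (integrable_const (N : ℝ)).mono' (by fun_prop) (ae_of_all _ fun x => by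
      simp only [ψ, Real.norm_eq_abs, abs_le]; constructor <;> simp)
  have hψf_int : ∀ N, Integrable (fun x => ψ N (f x)) μ := fun N =>
    hf.integrable_comp_of_integrable (hψ_int N)
  have hψ_zero : ∀ N, ∫ x, ψ N (f x) - ψ N x ∂μ = 0 := fun N => by
    rw [integral_sub (hψf_int N) (hψ_int N), sub_eq_zero, ← integral_map hf.measurable.aemeasurable
      (by rw [hf.map_eq]; exact (hψ_int N).aestronglyMeasurable), hf.map_eq]
  have hψ_le : ∀ N, ∀ᵐ x ∂μ, ‖ψ N (f x) - ψ N x‖ ≤ ‖g x‖ := fun N => by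
    filter_upwards [hφg] with x hx
    rw [← hx, Real.norm_eq_abs, Real.norm_eq_abs]
    calc |ψ N (f x) - ψ N x| ≤ |min (φ (f x)) N - min (φ x) N| := by
          simpa only [ψ, max_comm (-(N : ℝ))] using abs_max_sub_max_le_abs _ _ _
      _ ≤ |φ (f x) - φ x| := by
          simpa using abs_min_sub_min_le_max (φ (f x)) (N : ℝ) (φ x) N
  have hψ_tendsto : ∀ᵐ x ∂μ, Tendsto (fun N => ψ N (f x) - ψ N x) atTop (𝓝 (g x)) := by
    filter_upwards [hφg] with x hx
    refine tendsto_const_nhds.congr' ?_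
    filter_upwards [eventually_ge_atTop ⌈max |φ (f x)| |φ x|⌉₊] with N hN
    have h := Nat.ceil_le.mp hN
    simp only [ψ, ← hx]
    rw [max_le_iff, abs_le, abs_le] at h
    rw [min_eq_left h.1.2, min_eq_left h.2.2, max_eq_right h.1.1, max_eq_right h.2.1]
  refine tendsto_nhds_unique (tendsto_integral_of_dominated_convergence _
    (fun N => ((hψf_int N).sub (hψ_int N)).aestronglyMeasurable) hg.norm hψ_le hψ_tendsto) ?_
  simp only [Pi.sub_apply, hψ_zero, tendsto_const_nhds]

namespace PieceExchange

variable {T : ℝ × ℝ → ℝ × ℝ} {m : ℕ} (E : PieceExchange T m)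

theorem measurableSet_domain : MeasurableSet E.domain :=
  MeasurableSet.iUnion E.measD

instance isProbabilityMeasure_restrict_domain :
    IsProbabilityMeasure (volume.restrict E.domain) :=
  ⟨by rw [Measure.restrict_apply_univ]; exact E.measure_union⟩

theorem measurePreserving_R :
    MeasurePreserving E.R (volume.restrict E.domain) (volume.restrict E.domain) := by
  refine ⟨E.measR, Measure.ext fun A hA => ?_⟩
  rw [Measure.map_apply E.measR hA, Measure.restrict_apply hA,
    Measure.restrict_apply (E.measR hA), Set.inter_comm, Set.inter_comm A]
  exact E.meas_pres A hA

theorem mem_D_code {x : ℝ × ℝ} (hx : x ∈ E.domain) : x ∈ E.D (E.C x 0) :=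
  E.mem_code x hx 0

theorem measurable_code : Measurable fun x => E.C x 0 :=
  (measurable_pi_apply 0).comp E.measC

theorem restrict_domain_code_preimage (i : Fin m) :
    volume.restrict E.domain ((fun x => E.C x 0) ⁻¹' {i}) = volume (E.D i) := by
  rw [Measure.restrict_apply (E.measurable_code (measurableSet_singleton i))]
  refine measure_congr (ae_eq_set.mpr ⟨?_, ?_⟩)
  · exact measure_mono_null (fun x ⟨⟨hxi, hx⟩, hxD⟩ => hxD (hxi ▸ E.mem_D_code hx)) measure_empty
  · refine measure_mono_null (t := ⋃ j ≠ i, E.D i ∩ E.D j) ?_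
      ((measure_biUnion_null_iff (Set.to_countable _)).mpr fun j hj =>
        E.aeDisjoint i j (Ne.symm hj))
    rintro x ⟨hxi, hx⟩
    have hxD : x ∈ E.domain := Set.mem_iUnion.mpr ⟨i, hxi⟩
    exact Set.mem_biUnion (x := E.C x 0) (fun h => hx ⟨h, hxD⟩) ⟨hxi, E.mem_D_code hxD⟩

theorem integral_comp_code (w : Fin m → ℝ) :
    ∫ x, w (E.C x 0) ∂volume.restrict E.domain = ∑ i, w i * (volume (E.D i)).toReal := by
  rw [← integral_map E.measurable_code.aemeasurable
    (measurable_of_finite w).aestronglyMeasurable, integral_fintype Integrable.of_finite]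
  refine Finset.sum_congr rfl fun i _ => ?_
  rw [smul_eq_mul, mul_comm, measureReal_def,
    Measure.map_apply E.measurable_code (measurableSet_singleton i),
    E.restrict_domain_code_preimage i]

theorem integrable_comp_code (w : Fin m → ℝ) :
    Integrable (fun x => w (E.C x 0)) (volume.restrict E.domain) :=
  (integrable_map_measure (measurable_of_finite w).aestronglyMeasurable
    E.measurable_code.aemeasurable).mp Integrable.of_finite

theorem eq_sum_of_sub_comp_R (t : ℝ) (w : Fin m → ℝ) {φ : ℝ × ℝ → ℝ} (hφ : Measurable φ)
    (hφR : ∀ x ∈ E.domain, φ (E.R x) - φ x = t - w (E.C x 0)) :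
    t = ∑ i, w i * (volume (E.D i)).toReal := by
  have h := E.measurePreserving_R.integral_eq_zero_of_sub_comp_ae_eq
    (g := fun x => t - w (E.C x 0)) hφ
    ((integrable_const t).sub (E.integrable_comp_code w))
    ((ae_restrict_mem E.measurableSet_domain).mono hφR)
  rw [integral_sub (integrable_const t) (E.integrable_comp_code w), integral_const,
    E.integral_comp_code] at h
  simpa [sub_eq_zero] using h

end PieceExchange

theorem translation_vector_from_frequencies_general (r s : ℝ)
    (m : ℕ) (E : PieceExchange (fun x : ℝ × ℝ => (x.1 + r, x.2 + s)) m) :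
    r = ∑ i : Fin m, ((E.vec i).1 : ℝ) * (volume (E.D i)).toReal ∧
    s = ∑ i : Fin m, ((E.vec i).2 : ℝ) * (volume (E.D i)).toReal := by
  have hR : ∀ x ∈ E.domain, E.R x = (x.1 + r, x.2 + s) - latVec (E.vec (E.C x 0)) :=
    fun x hx => E.R_eq x hx 0
  constructor
  · refine E.eq_sum_of_sub_comp_R r _ measurable_fst fun x hx => ?_
    simp only [hR x hx, latVec, Prod.fst_sub]
    ring
  · refine E.eq_sum_of_sub_comp_R s _ measurable_snd fun x hx => ?_
    simp only [hR x hx, latVec, Prod.snd_sub]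
    ring

/-- Let `T (x,y) = (x+r, y+s)` be a plane translation inducing an ergodic
torus rotation, and let `E` be an exchange of `m` pieces adapted to `T` with translation
vectors `(n_i, m_i)` and piece measures `α_i`, whose generated system is measure-equivalent to
the torus rotation.  Then `r = Σ n_i α_i` and `s = Σ m_i α_i`. -/
theorem translation_vector_from_frequencies (r s : ℝ)
    (hirr : ∀ p q : ℤ, (p, q) ≠ (0, 0) → ∀ k : ℤ, (p : ℝ) * r + (q : ℝ) * s ≠ (k : ℝ))
    (m : ℕ) (E : PieceExchange (fun x : ℝ × ℝ => (x.1 + r, x.2 + s)) m)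
    (hconj : E.Conjugate) :
    r = ∑ i : Fin m, ((E.vec i).1 : ℝ) * (volume (E.D i)).toReal ∧
    s = ∑ i : Fin m, ((E.vec i).2 : ℝ) * (volume (E.D i)).toReal :=
  translation_vector_from_frequencies_general r s m E

end
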